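/- arXiv:1703.10773 — 3 statements merged into one kernel-verified Lean document; each statement's English description precedes it below -/
import Mathlib

section
/- For any linear map A on ℂ^k and any 1 ≤ p ≤ k, the operator norm of the induced map ∧^p A on the p-th exterior power of ℂ^k equals the product a₁(A)⋯a_p(A) of the p largest singular values of A. -/
open MeasureTheory Filter Topology
open scoped ComplexOrder Matrix InnerProductSpace ENNReal
noncomputable section

abbrev Mat (k : ℕ) := Matrix (Fin k) (Fin k) ℂ

/-- Index set for the standard orthonormal basis `e_{i₁} ∧ … ∧ e_{i_p}` of `∧^p ℂ^k`. -/
abbrev WedgeIdx (k p : ℕ) := {s : Finset (Fin k) // s.card = p}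

/-- The matrix of `∧^p A` in the (orthonormal, for the Gram-determinant inner product)
basis of decomposable standard vectors: its entries are the `p×p` minors of `A`. -/
def wedgeMap {k : ℕ} (p : ℕ) (A : Mat k) : Matrix (WedgeIdx k p) (WedgeIdx k p) ℂ :=
  Matrix.of fun q r =>
    (A.submatrix (fun i : Fin p => (q.1.orderIsoOfFin q.2 i : Fin k))
                 (fun j : Fin p => (r.1.orderIsoOfFin r.2 j : Fin k))).det

/-- The operator norm of `∧^p A` on the `p`-th exterior power, equipped with the
Gram-determinant inner product. -/
def wedgeNorm {k : ℕ} (p : ℕ) (A : Mat k) : ℝ :=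
  ‖Matrix.toEuclideanCLM (𝕜 := ℂ) (wedgeMap p A)‖

/-! The C*-identity and the multiplicativity of `∧^p` (Cauchy–Binet) give
`‖∧^p A‖² = ‖∧^p (A*A)‖`. Diagonalising `A*A = U D U*` with `U` unitary, `∧^p U` is unitary and
`∧^p D` is diagonal with entries the products of `p` eigenvalues of `A*A`, so its norm is the
largest such product: that of the `p` largest eigenvalues. -/

open scoped Matrix.Norms.L2Operator

theorem Fin.val_le_of_strictMono {p k : ℕ} {f : Fin p → Fin k} (hf : StrictMono f) (i : Fin p) :
    (i : ℕ) ≤ f i := by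
  rw [← Fin.card_Iio i, ← Fin.card_Iio (f i)]
  exact Finset.card_le_card_of_injOn f (fun j hj => by simpa using hf (by simpa using hj))
    hf.injective.injOn

namespace WedgeIdx

variable {k p : ℕ}

def emb (s : WedgeIdx k p) : Fin p ↪o Fin k := s.1.orderEmbOfFin s.2

theorem image_emb (s : WedgeIdx k p) : Finset.univ.image s.emb = s.1 :=
  s.1.image_orderEmbOfFin_univ s.2

theorem emb_mem (s : WedgeIdx k p) (i : Fin p) : s.emb i ∈ s.1 :=
  s.1.orderEmbOfFin_mem s.2 i

theorem prod_emb {M : Type*} [CommMonoid M] (s : WedgeIdx k p) (f : Fin k → M) :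
    ∏ i, f (s.emb i) = ∏ x ∈ s.1, f x := by
  rw [← s.image_emb, Finset.prod_image fun i _ j _ h => s.emb.injective h]

theorem injective_emb_comp_perm :
    Function.Injective fun x : WedgeIdx k p × Equiv.Perm (Fin p) => x.1.emb ∘ x.2 := by
  rintro ⟨s, σ⟩ ⟨t, τ⟩ h
  have image_comp (s : WedgeIdx k p) (σ : Equiv.Perm (Fin p)) :
      Finset.univ.image (s.emb ∘ σ) = s.1 := by
    rw [← Finset.image_image, Finset.image_univ_equiv, s.image_emb]
  have hst : s = t := Subtype.ext <| by
    rw [← image_comp s σ, ← image_comp t τ]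
    exact congrArg (Finset.univ.image ·) h
  subst hst
  obtain rfl : σ = τ := Equiv.ext fun i => s.emb.injective (congrFun h i)
  rfl

theorem exists_emb_comp_perm_eq {f : Fin p → Fin k} (hf : Function.Injective f) :
    ∃ x : WedgeIdx k p × Equiv.Perm (Fin p), x.1.emb ∘ x.2 = f := by
  let s : WedgeIdx k p := ⟨Finset.univ.image f, by simp [Finset.card_image_of_injective _ hf]⟩
  let τ : Fin p → Fin p := fun i =>
    (s.1.orderIsoOfFin s.2).symm ⟨f i, Finset.mem_image_of_mem f (Finset.mem_univ i)⟩
  have hτ : Function.Injective τ := fun i j h =>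
    hf (congrArg Subtype.val ((s.1.orderIsoOfFin s.2).symm.injective h))
  refine ⟨⟨s, Equiv.ofBijective τ (Finite.injective_iff_bijective.mp hτ)⟩, funext fun i => ?_⟩
  simp [emb, τ, ← Finset.coe_orderIsoOfFin_apply]

end WedgeIdx

theorem Finset.prod_le_prod_castLE_of_antitone {R : Type*} [CommSemiring R] [PartialOrder R]
    [IsOrderedRing R] {k p : ℕ} (hpk : p ≤ k) {ν : Fin k → R} (hν : Antitone ν)
    (hν0 : ∀ i, 0 ≤ ν i) {t : Finset (Fin k)} (ht : t.card = p) :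
    ∏ j ∈ t, ν j ≤ ∏ i : Fin p, ν (Fin.castLE hpk i) := by
  rw [← WedgeIdx.prod_emb ⟨t, ht⟩]
  refine Finset.prod_le_prod (fun i _ => hν0 _) fun i _ => hν ?_
  exact Fin.le_def.mpr (Fin.val_le_of_strictMono (WedgeIdx.emb ⟨t, ht⟩).strictMono i)

namespace Matrix

variable {R : Type*} [CommRing R]

theorem det_mul_eq_sum_fun {m ι : Type*} [Fintype m] [DecidableEq m] [Fintype ι]
    (M : Matrix m ι R) (N : Matrix ι m R) :
    (M * N).det = ∑ f : m → ι, (M.submatrix id f).det * ∏ i, N (f i) i := by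
  simp only [det_apply', mul_apply, Finset.prod_univ_sum, Finset.mul_sum, Finset.sum_mul,
    Fintype.piFinset_univ, submatrix_apply, id_eq, Finset.prod_mul_distrib]
  rw [Finset.sum_comm]
  simp only [mul_assoc]

theorem det_mul_eq_sum_wedgeIdx {k p : ℕ} (M : Matrix (Fin p) (Fin k) R)
    (N : Matrix (Fin k) (Fin p) R) :
    (M * N).det = ∑ s : WedgeIdx k p, (M.submatrix id s.emb).det * (N.submatrix s.emb id).det := by
  classical
  set G : (Fin p → Fin k) → R := fun f => (M.submatrix id f).det * ∏ i, N (f i) i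
  have sum_perm (s : WedgeIdx k p) : (M.submatrix id s.emb).det * (N.submatrix s.emb id).det =
      ∑ σ : Equiv.Perm (Fin p), G (s.emb ∘ σ) := by
    simp only [G, det_apply' (N.submatrix _ _), Finset.mul_sum]
    refine Finset.sum_congr rfl fun σ _ => ?_
    rw [show M.submatrix id (s.emb ∘ σ) = (M.submatrix id s.emb).submatrix id σ from rfl,
      det_permute']
    simp only [submatrix_apply, id_eq, Function.comp_apply]
    ring
  rw [det_mul_eq_sum_fun, Finset.sum_congr rfl fun s _ => sum_perm s, ← Fintype.sum_prod_type']
  symm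
  refine Finset.sum_of_injOn (fun x => x.1.emb ∘ x.2) WedgeIdx.injective_emb_comp_perm.injOn
    (by simp) (fun f _ hf => ?_) fun _ _ => rfl
  have hf' : ¬ Function.Injective f := fun hinj => hf <| by
    simpa using WedgeIdx.exists_emb_comp_perm_eq hinj
  obtain ⟨i, j, hij, hne⟩ : ∃ i j, f i = f j ∧ i ≠ j := by
    simpa [Function.Injective] using hf'
  change (M.submatrix id f).det * _ = 0
  rw [det_zero_of_column_eq hne fun r => by simp [hij], zero_mul]

end Matrix

section wedgeMap

open Matrix

variable {k p : ℕ}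

theorem wedgeMap_apply (A : Mat k) (q r : WedgeIdx k p) :
    wedgeMap p A q r = (A.submatrix q.emb r.emb).det := rfl

theorem wedgeMap_mul (A B : Mat k) : wedgeMap p (A * B) = wedgeMap p A * wedgeMap p B := by
  ext q r
  rw [mul_apply, wedgeMap_apply, ← submatrix_mul_equiv _ _ _ (Equiv.refl _),
    det_mul_eq_sum_wedgeIdx]
  rfl

theorem wedgeMap_conjTranspose (A : Mat k) : wedgeMap p Aᴴ = (wedgeMap p A)ᴴ := by
  ext q r
  rw [wedgeMap_apply, conjTranspose_apply, wedgeMap_apply, ← conjTranspose_submatrix,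
    det_conjTranspose]

theorem wedgeMap_diagonal (d : Fin k → ℂ) :
    wedgeMap p (diagonal d) = diagonal fun s : WedgeIdx k p => ∏ i ∈ s.1, d i := by
  ext q r
  rw [wedgeMap_apply]
  by_cases h : q = r
  · subst h
    rw [diagonal_apply_eq, submatrix_diagonal _ _ q.emb.injective, det_diagonal]
    exact q.prod_emb d
  · rw [diagonal_apply_ne _ h]
    obtain ⟨x, hxq, hxr⟩ : ∃ x ∈ q.1, x ∉ r.1 := by
      by_contra! hc
      exact h (Subtype.ext (Finset.eq_of_subset_of_card_le hc (by rw [q.2, r.2])))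
    obtain ⟨i, rfl⟩ : ∃ i, q.emb i = x := by simpa [← q.image_emb] using hxq
    exact det_eq_zero_of_row_eq_zero i fun j =>
      diagonal_apply_ne _ fun hc => hxr (hc ▸ r.emb_mem j)

theorem wedgeMap_one : wedgeMap p (1 : Mat k) = 1 := by
  rw [← diagonal_one, wedgeMap_diagonal]
  simp

theorem wedgeMap_mem_unitary {U : Mat k} (hU : U ∈ unitaryGroup (Fin k) ℂ) :
    wedgeMap p U ∈ unitary (Matrix (WedgeIdx k p) (WedgeIdx k p) ℂ) := by
  have hstar : star (wedgeMap p U) = wedgeMap p (star U) := by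
    rw [star_eq_conjTranspose, star_eq_conjTranspose, wedgeMap_conjTranspose]
  rw [Unitary.mem_iff, hstar, ← wedgeMap_mul, ← wedgeMap_mul, Unitary.star_mul_self_of_mem hU,
    Unitary.mul_star_self_of_mem hU, wedgeMap_one]
  exact ⟨rfl, rfl⟩

end wedgeMap

section wedgeNorm

open Matrix

variable {k p : ℕ}

theorem wedgeNorm_sq (A : Mat k) : wedgeNorm p A ^ 2 = ‖wedgeMap p (Aᴴ * A)‖ := by
  rw [wedgeMap_mul, wedgeMap_conjTranspose, l2_opNorm_conjTranspose_mul_self, sq]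
  rfl

theorem norm_wedgeMap_unitary_mul_mul_star {U : Mat k} (hU : U ∈ unitaryGroup (Fin k) ℂ)
    (D : Mat k) : ‖wedgeMap p (U * D * star U)‖ = ‖wedgeMap p D‖ := by
  have hWU := wedgeMap_mem_unitary (p := p) hU
  rw [wedgeMap_mul, wedgeMap_mul, star_eq_conjTranspose, wedgeMap_conjTranspose,
    ← star_eq_conjTranspose, CStarRing.norm_mul_mem_unitary _ (Unitary.star_mem hWU),
    CStarRing.norm_mem_unitary_mul _ hWU]

theorem norm_wedgeMap_diagonal_ofReal (hpk : p ≤ k) {μ : Fin k → ℝ} (hμ0 : ∀ i, 0 ≤ μ i)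
    (σ : Equiv.Perm (Fin k)) (hσ : Antitone (μ ∘ σ)) :
    ‖wedgeMap p (diagonal (RCLike.ofReal ∘ μ : Fin k → ℂ))‖ =
      ∏ i : Fin p, μ (σ (Fin.castLE hpk i)) := by
  have norm_prod_ofReal (s : Finset (Fin k)) :
      ‖∏ i ∈ s, (RCLike.ofReal ∘ μ : Fin k → ℂ) i‖ = ∏ i ∈ s, μ i := by
    rw [norm_prod]
    exact Finset.prod_congr rfl fun i _ => Complex.norm_of_nonneg (hμ0 i)
  rw [wedgeMap_diagonal, l2_opNorm_diagonal]
  apply le_antisymm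
  · refine (pi_norm_le_iff_of_nonneg (Finset.prod_nonneg fun i _ => hμ0 _)).mpr fun s => ?_
    have reindex : ∏ i ∈ s.1, μ i = ∏ j ∈ s.1.map σ.symm.toEmbedding, (μ ∘ σ) j := by simp
    rw [norm_prod_ofReal, reindex]
    exact Finset.prod_le_prod_castLE_of_antitone hpk hσ (fun i => hμ0 _) (by simp [s.2])
  · let s₀ : WedgeIdx k p := ⟨Finset.univ.map ((Fin.castLEEmb hpk).trans σ.toEmbedding),
      by simp⟩
    calc ∏ i : Fin p, μ (σ (Fin.castLE hpk i)) = ‖∏ i ∈ s₀.1, (RCLike.ofReal ∘ μ) i‖ := by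
          rw [norm_prod_ofReal]
          simp [s₀]
      _ ≤ _ := norm_le_pi_norm (fun s : WedgeIdx k p => ∏ i ∈ s.1, (RCLike.ofReal ∘ μ) i) s₀

end wedgeNorm

open Matrix in
/-- The operator norm of `∧^p A` equals the product `a₁(A)⋯a_p(A)` of the `p` largest singular
values of `A`, i.e. of the square roots of the eigenvalues of `A*A` arranged in
decreasing order. -/
theorem stmt2 (k : ℕ) (A : Mat k) :
    ∃ a : Fin k → ℝ, Antitone a ∧
      (∃ σ : Equiv.Perm (Fin k),
        ∀ i, a i = Real.sqrt ((Matrix.isHermitian_conjTranspose_mul_self A).eigenvalues (σ i))) ∧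
      ∀ (p : ℕ) (hp1 : 1 ≤ p) (hpk : p ≤ k),
        wedgeNorm p A = ∏ i : Fin p, a (Fin.castLE hpk i) := by
  set hA := isHermitian_conjTranspose_mul_self A
  have hμ0 : ∀ i, 0 ≤ hA.eigenvalues i := eigenvalues_conjTranspose_mul_self_nonneg A
  -- `eigenvalues₀` lists the eigenvalues in decreasing order; `σ` carries that order over.
  let σ : Equiv.Perm (Fin k) :=
    (finCongr (Fintype.card_fin k).symm).trans (Fintype.equivOfCardEq (Fintype.card_fin _))
  have hsorted : Antitone (hA.eigenvalues ∘ σ) := fun i j hij =>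
    hA.eigenvalues₀_antitone (by simpa [σ] using hij)
  refine ⟨fun i => √(hA.eigenvalues (σ i)), fun i j hij => Real.sqrt_le_sqrt (hsorted hij),
    ⟨σ, fun _ => rfl⟩, fun p _ hpk => ?_⟩
  have hnorm_sq : wedgeNorm p A ^ 2 = ∏ i : Fin p, hA.eigenvalues (σ (Fin.castLE hpk i)) := by
    rw [wedgeNorm_sq, ← norm_wedgeMap_diagonal_ofReal hpk hμ0 σ hsorted,
      ← norm_wedgeMap_unitary_mul_mul_star hA.eigenvectorUnitary.2 (diagonal _)]
    exact congrArg (‖wedgeMap p ·‖) hA.spectral_theorem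
  rw [← Real.sqrt_prod _ fun i _ => hμ0 _, ← hnorm_sq]
  exact (Real.sqrt_sq (norm_nonneg _)).symm
end
end

section
/- Suppose ν is a probability measure on P(ℂ^k) invariant under the Markov kernel Π(x̂, S) = ∫ 1_S(v·x̂) ‖vx‖² dμ(v), where ∫ v*v dμ(v) = Id. Then the density matrix ρ_ν := ∫ π_{x̂} dν(x̂) (the barycenter of rank-one projections) is a fixed point of the quantum channel φ(ρ) = ∫ v ρ v* dμ(v), i.e., φ(ρ_ν) = ρ_ν. -/
open MeasureTheory Filter Topology
open scoped ComplexOrder Matrix InnerProductSpace ENNReal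
noncomputable section
attribute [local instance] Classical.propDecidable

abbrev Evec (k : ℕ) := EuclideanSpace ℂ (Fin k)

instance (k : ℕ) : MeasurableSpace (Mat k) :=
  inferInstanceAs (MeasurableSpace (Fin k → Fin k → ℂ))
instance (k : ℕ) : MeasurableSpace (Evec k) := borel _
instance (k : ℕ) : BorelSpace (Evec k) := ⟨rfl⟩
instance (k : ℕ) : MeasurableSpace (Projectivization ℂ (Evec k)) :=
  inferInstanceAs (MeasurableSpace (Quotient (projectivizationSetoid ℂ (Evec k))))

/-- The unit-norm canonical representative of a point of projective space. -/
def unitRep {k : ℕ} (x : Projectivization ℂ (Evec k)) : Evec k :=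
  (‖x.rep‖⁻¹ : ℂ) • x.rep

/-- Action of a matrix on a vector of `ℂ^k`. -/
def matVec {k : ℕ} (v : Mat k) (x : Evec k) : Evec k := Matrix.toEuclideanLin v x

/-- The integrand `1_S(v·x̂) ‖v x‖²`, understood as `0` when `v x = 0`. -/
def kerInt {k : ℕ} (v : Mat k) (x : Projectivization ℂ (Evec k))
    (S : Set (Projectivization ℂ (Evec k))) : ℝ :=
  if h : matVec v (unitRep x) = 0 then 0
  else S.indicator (fun _ => ‖matVec v (unitRep x)‖ ^ 2) (Projectivization.mk ℂ _ h)

/-- The transition kernel `Π(x̂, S) = ∫ 1_S(v·x̂) ‖v x‖² dμ(v)`. -/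
def PiKer {k : ℕ} (μ : Measure (Mat k)) (x : Projectivization ℂ (Evec k))
    (S : Set (Projectivization ℂ (Evec k))) : ℝ :=
  ∫ v, kerInt v x S ∂μ

/-- The orthogonal projection `π_{x̂}` onto the line `x̂ ⊂ ℂ^k`, as a matrix. -/
def projMat {k : ℕ} (x : Projectivization ℂ (Evec k)) : Mat k :=
  Matrix.of fun i j => unitRep x i * (starRingEnd ℂ) (unitRep x j)

/-!
Invariance of `ν` says `∫ Π 1_S dν = ν S`, where `(Π g)(x̂) = ∫ g(v·x̂) ‖v x‖² dμ(v)`.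
By linearity and dominated convergence this extends to `∫ Π g dν = ∫ g dν` for every bounded
measurable `g`. For the entry `g = (π_·)ᵢⱼ` the integrand is
`g(v·x̂) ‖v x‖² = (v x)ᵢ conj (v x)ⱼ = (v π_x̂ v*)ᵢⱼ`, which is linear in `π_x̂`;
integrating over `ν` turns `π_x̂` into `ρ`, so `∫ (v ρ v*)ᵢⱼ dμ = ∫ gᵢⱼ dν = ρᵢⱼ`.
-/

local notation "ℙ" k:max => Projectivization ℂ (Evec k)

instance (k : ℕ) : BorelSpace (Mat k) := inferInstanceAs (BorelSpace (Fin k → Fin k → ℂ))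

section Linear

variable {k : ℕ}

lemma norm_unitRep (x : ℙ k) : ‖unitRep x‖ = 1 := by
  have h : ‖x.rep‖ ≠ 0 := norm_ne_zero_iff.2 x.rep_nonzero
  rw [unitRep, norm_smul]
  simp only [Complex.norm_real, norm_inv, norm_norm]
  field_simp

lemma matVec_apply (v : Mat k) (u : Evec k) (i : Fin k) : matVec v u i = (v *ᵥ u) i := rfl

lemma norm_matVec_le (v : Mat k) (u : Evec k) :
    ‖matVec v u‖ ≤ ‖Matrix.toEuclideanCLM (𝕜 := ℂ) v‖ * ‖u‖ :=
  (Matrix.toEuclideanCLM (𝕜 := ℂ) v).le_opNorm u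

lemma norm_matVec_unitRep_le (v : Mat k) (x : ℙ k) :
    ‖matVec v (unitRep x)‖ ≤ ‖Matrix.toEuclideanCLM (𝕜 := ℂ) v‖ := by
  simpa [norm_unitRep] using norm_matVec_le v (unitRep x)

lemma measurable_matVec (u : Evec k) : Measurable fun v : Mat k => matVec v u :=
  (((Matrix.toEuclideanLin (𝕜 := ℂ) (m := Fin k) (n := Fin k)).toLinearMap).flip u
    |>.continuous_of_finiteDimensional).measurable

lemma norm_entry_le_norm_toEuclideanCLM (v : Mat k) (i a : Fin k) :
    ‖v i a‖ ≤ ‖Matrix.toEuclideanCLM (𝕜 := ℂ) v‖ := by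
  have hcol : v i a = matVec v (EuclideanSpace.single a 1) i := by
    simp [matVec_apply]
  calc ‖v i a‖ ≤ ‖matVec v (EuclideanSpace.single a 1)‖ := hcol ▸ PiLp.norm_apply_le _ i
    _ ≤ ‖Matrix.toEuclideanCLM (𝕜 := ℂ) v‖ := by
      simpa using norm_matVec_le v (EuclideanSpace.single a (1 : ℂ))

lemma integrable_entry_mul_conj_entry {μ : Measure (Mat k)}
    (hmom : Integrable (fun v => ‖Matrix.toEuclideanCLM (𝕜 := ℂ) (n := Fin k) v‖ ^ 2) μ)
    (i j a b : Fin k) : Integrable (fun v : Mat k => v i a * starRingEnd ℂ (v j b)) μ := by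
  refine hmom.mono' (Measurable.aestronglyMeasurable ?_) (ae_of_all _ fun v => ?_)
  · fun_prop
  · rw [norm_mul, RCLike.norm_conj, sq]
    exact mul_le_mul (norm_entry_le_norm_toEuclideanCLM v i a)
      (norm_entry_le_norm_toEuclideanCLM v j b) (norm_nonneg _) (norm_nonneg _)

end Linear

section HomogeneousExtension

variable {k : ℕ}

def homExt (g : ℙ k → ℂ) (w : Evec k) : ℂ :=
  if h : w = 0 then 0 else g (Projectivization.mk ℂ w h) * (‖w‖ : ℂ) ^ 2

lemma measurable_homExt {g : ℙ k → ℂ} (hg : Measurable g) : Measurable (homExt g) := by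
  have hmk : Measurable fun w : ({w : Evec k | w = 0}ᶜ : Set (Evec k)) =>
      g (Projectivization.mk ℂ w.1 w.2) * (‖(w : Evec k)‖ : ℂ) ^ 2 :=
    (hg.comp measurable_quotient_mk'').mul
      ((Complex.measurable_ofReal.comp measurable_subtype_coe.norm).pow_const 2)
  exact Measurable.dite measurable_const hmk (measurableSet_eq (a := (0 : Evec k)))

lemma norm_homExt_le {g : ℙ k → ℂ} {C : ℝ} (hC : ∀ y, ‖g y‖ ≤ C) (w : Evec k) :
    ‖homExt g w‖ ≤ C * ‖w‖ ^ 2 := by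
  unfold homExt
  split_ifs with h
  · simp [h]
  · rw [norm_mul, norm_pow, Complex.norm_real, norm_norm]
    exact mul_le_mul_of_nonneg_right (hC _) (by positivity)

lemma homExt_add (f g : ℙ k → ℂ) (w : Evec k) :
    homExt (f + g) w = homExt f w + homExt g w := by
  unfold homExt
  split_ifs
  · simp
  · simp only [Pi.add_apply, add_mul]

lemma homExt_indicator_matVec (S : Set (ℙ k)) (c : ℂ) (v : Mat k) (x : ℙ k) :
    homExt (S.indicator fun _ => c) (matVec v (unitRep x)) = c * kerInt v x S := by
  unfold homExt kerInt
  split_ifs with h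
  · simp
  · by_cases hS : Projectivization.mk ℂ _ h ∈ S <;> simp [hS]

lemma projMat_mk {w : Evec k} (hw : w ≠ 0) (i j : Fin k) :
    projMat (Projectivization.mk ℂ w hw) i j = w i * starRingEnd ℂ (w j) / (‖w‖ : ℂ) ^ 2 := by
  obtain ⟨a, ha⟩ := (Projectivization.mk_eq_mk_iff' ℂ _ _
      (Projectivization.rep_nonzero _) hw).1 (Projectivization.mk_rep (Projectivization.mk ℂ w hw))
  have ha0 : a ≠ 0 := by
    rintro rfl
    exact Projectivization.rep_nonzero (Projectivization.mk ℂ w hw) (by rw [← ha, zero_smul])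
  have hw0 : (‖w‖ : ℂ) ≠ 0 := by exact_mod_cast norm_ne_zero_iff.2 hw
  have haa : a * starRingEnd ℂ a = (‖a‖ : ℂ) ^ 2 := by
    rw [Complex.mul_conj, Complex.normSq_eq_norm_sq]; push_cast; rfl
  simp only [projMat, unitRep, Matrix.of_apply, ← ha, norm_smul, PiLp.smul_apply, smul_eq_mul,
    map_mul, map_inv₀, Complex.conj_ofReal]
  push_cast
  field_simp
  linear_combination (w i * starRingEnd ℂ (w j)) * haa

lemma homExt_projMat (i j : Fin k) (w : Evec k) :
    homExt (fun y => projMat y i j) w = w i * starRingEnd ℂ (w j) := by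
  unfold homExt
  split_ifs with h
  · simp [h]
  · have hw0 : (‖w‖ : ℂ) ≠ 0 := by exact_mod_cast norm_ne_zero_iff.2 h
    beta_reduce
    rw [projMat_mk h i j, div_mul_cancel₀ _ (pow_ne_zero 2 hw0)]

end HomogeneousExtension

section KernelAction

variable {k : ℕ} {μ : Measure (Mat k)}

/-- `(Π g)(x̂)`: the kernel `Π` acting on functions. -/
def kernelAction (μ : Measure (Mat k)) (g : ℙ k → ℂ) (x : ℙ k) : ℂ :=
  ∫ v, homExt g (matVec v (unitRep x)) ∂μ

lemma norm_homExt_matVec_le {g : ℙ k → ℂ} {C : ℝ} (hC : ∀ y, ‖g y‖ ≤ C) (v : Mat k) (x : ℙ k) :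
    ‖homExt g (matVec v (unitRep x))‖ ≤ C * ‖Matrix.toEuclideanCLM (𝕜 := ℂ) v‖ ^ 2 :=
  (norm_homExt_le hC _).trans <| mul_le_mul_of_nonneg_left
    (pow_le_pow_left₀ (norm_nonneg _) (norm_matVec_unitRep_le v x) 2)
    ((norm_nonneg _).trans (hC x))

lemma integrable_homExt_matVec
    (hmom : Integrable (fun v => ‖Matrix.toEuclideanCLM (𝕜 := ℂ) (n := Fin k) v‖ ^ 2) μ)
    {g : ℙ k → ℂ} {C : ℝ} (hg : Measurable g) (hC : ∀ y, ‖g y‖ ≤ C) (x : ℙ k) :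
    Integrable (fun v => homExt g (matVec v (unitRep x))) μ :=
  (hmom.const_mul C).mono'
    ((measurable_homExt hg).comp (measurable_matVec _)).aestronglyMeasurable
    (ae_of_all _ fun v => norm_homExt_matVec_le hC v x)

lemma norm_kernelAction_le
    (hmom : Integrable (fun v => ‖Matrix.toEuclideanCLM (𝕜 := ℂ) (n := Fin k) v‖ ^ 2) μ)
    {g : ℙ k → ℂ} {C : ℝ} (hC : ∀ y, ‖g y‖ ≤ C) (x : ℙ k) :
    ‖kernelAction μ g x‖ ≤ C * ∫ v, ‖Matrix.toEuclideanCLM (𝕜 := ℂ) v‖ ^ 2 ∂μ := by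
  rw [← integral_const_mul]
  exact norm_integral_le_of_norm_le (hmom.const_mul C)
    (ae_of_all _ fun v => norm_homExt_matVec_le hC v x)

lemma kernelAction_add
    (hmom : Integrable (fun v => ‖Matrix.toEuclideanCLM (𝕜 := ℂ) (n := Fin k) v‖ ^ 2) μ)
    {f g : ℙ k → ℂ} {C D : ℝ} (hf : Measurable f) (hC : ∀ y, ‖f y‖ ≤ C)
    (hg : Measurable g) (hD : ∀ y, ‖g y‖ ≤ D) (x : ℙ k) :
    kernelAction μ (f + g) x = kernelAction μ f x + kernelAction μ g x := by
  simp only [kernelAction, homExt_add]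
  exact integral_add (integrable_homExt_matVec hmom hf hC x)
    (integrable_homExt_matVec hmom hg hD x)

lemma kernelAction_indicator (S : Set (ℙ k)) (c : ℂ) (x : ℙ k) :
    kernelAction μ (S.indicator fun _ => c) x = c * PiKer μ x S := by
  simp only [kernelAction, PiKer, homExt_indicator_matVec, integral_const_mul,
    integral_complex_ofReal]

lemma tendsto_kernelAction
    (hmom : Integrable (fun v => ‖Matrix.toEuclideanCLM (𝕜 := ℂ) (n := Fin k) v‖ ^ 2) μ)
    {g : ℕ → ℙ k → ℂ} {g₀ : ℙ k → ℂ} {C : ℝ} (hg : ∀ n, Measurable (g n))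
    (hC : ∀ n y, ‖g n y‖ ≤ C) (hlim : ∀ y, Tendsto (fun n => g n y) atTop (𝓝 (g₀ y)))
    (x : ℙ k) : Tendsto (fun n => kernelAction μ (g n) x) atTop (𝓝 (kernelAction μ g₀ x)) := by
  refine tendsto_integral_of_dominated_convergence _
    (fun n => (integrable_homExt_matVec hmom (hg n) (hC n) x).aestronglyMeasurable)
    (hmom.const_mul C) (fun n => ae_of_all _ fun v => norm_homExt_matVec_le (hC n) v x)
    (ae_of_all _ fun v => ?_)
  unfold homExt
  split_ifs
  · exact tendsto_const_nhds
  · exact (hlim _).mul_const _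

lemma kernelAction_projMat (i j : Fin k) (x : ℙ k) :
    kernelAction μ (fun y => projMat y i j) x = ∫ v, (v * projMat x * vᴴ) i j ∂μ := by
  have hproj : projMat x = Matrix.vecMulVec (unitRep x) (star (unitRep x).ofLp) := rfl
  simp only [kernelAction, homExt_projMat, hproj, Matrix.mul_vecMulVec, Matrix.vecMulVec_mul,
    ← Matrix.star_mulVec, Matrix.vecMulVec_apply, matVec_apply]
  rfl

end KernelAction

section Invariance

variable {k : ℕ} {μ : Measure (Mat k)} {ν : Measure (ℙ k)}

def IsPiInvariant (μ : Measure (Mat k)) (ν : Measure (ℙ k)) : Prop :=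
  ∀ S : Set (ℙ k), MeasurableSet S → ∫ x, PiKer μ x S ∂ν = (ν S).toReal

lemma norm_indicator_one_le (S : Set (ℙ k)) (y : ℙ k) :
    ‖S.indicator (fun _ => (1 : ℂ)) y‖ ≤ 1 :=
  (norm_indicator_le_norm_self _ y).trans_eq norm_one

lemma piKer_add_piKer_compl
    (hmom : Integrable (fun v => ‖Matrix.toEuclideanCLM (𝕜 := ℂ) (n := Fin k) v‖ ^ 2) μ)
    {S : Set (ℙ k)} (hS : MeasurableSet S) (x : ℙ k) :
    PiKer μ x S + PiKer μ x Sᶜ = PiKer μ x Set.univ := by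
  have hadd := kernelAction_add hmom (μ := μ) (measurable_const.indicator hS)
    (norm_indicator_one_le S) (measurable_const.indicator hS.compl) (norm_indicator_one_le Sᶜ) x
  have huniv := kernelAction_indicator (μ := μ) Set.univ 1 x
  rw [Set.indicator_self_add_compl] at hadd
  rw [Set.indicator_univ] at huniv
  rw [kernelAction_indicator, kernelAction_indicator, huniv] at hadd
  have h : ((PiKer μ x S + PiKer μ x Sᶜ : ℝ) : ℂ) = PiKer μ x Set.univ := by
    push_cast
    simpa using hadd.symm
  exact_mod_cast h

/-- A non-integrable function has integral `0`, which invariance excludes when `ν S ≠ 0`;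
a null `S` is handled through `Π(x, S) = Π(x, P(ℂ^k)) - Π(x, Sᶜ)`. -/
lemma integrable_piKer [IsFiniteMeasure ν]
    (hmom : Integrable (fun v => ‖Matrix.toEuclideanCLM (𝕜 := ℂ) (n := Fin k) v‖ ^ 2) μ)
    (hinv : IsPiInvariant μ ν) {S : Set (ℙ k)} (hS : MeasurableSet S) :
    Integrable (fun x => PiKer μ x S) ν := by
  rcases eq_zero_or_neZero ν with rfl | hν
  · exact integrable_zero_measure
  have of_ne_zero : ∀ T, MeasurableSet T → ν T ≠ 0 → Integrable (fun x => PiKer μ x T) ν := by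
    intro T hT hT0
    by_contra hni
    have h := hinv T hT
    rw [integral_undef hni] at h
    exact ENNReal.toReal_ne_zero.2 ⟨hT0, measure_ne_top ν T⟩ h.symm
  by_cases hS0 : ν S = 0
  · have hSc : ν Sᶜ ≠ 0 := by
      rw [measure_compl hS (measure_ne_top _ _), hS0, tsub_zero]
      exact NeZero.ne _
    refine ((of_ne_zero _ .univ (NeZero.ne _)).sub (of_ne_zero _ hS.compl hSc)).congr
      (ae_of_all _ fun x => ?_)
    simp only [Pi.sub_apply]
    linarith [piKer_add_piKer_compl hmom hS x]
  · exact of_ne_zero S hS hS0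

lemma integral_kernelAction_simpleFunc [IsFiniteMeasure ν]
    (hmom : Integrable (fun v => ‖Matrix.toEuclideanCLM (𝕜 := ℂ) (n := Fin k) v‖ ^ 2) μ)
    (hinv : IsPiInvariant μ ν) (s : SimpleFunc (ℙ k) ℂ) :
    Integrable (fun x => kernelAction μ s x) ν ∧ ∫ x, kernelAction μ s x ∂ν = ∫ y, s y ∂ν := by
  induction s using SimpleFunc.induction with
  | @const c S hS =>
    have hcoe : ⇑(SimpleFunc.piecewise S hS (SimpleFunc.const _ c) (SimpleFunc.const _ 0)) =
        S.indicator fun _ => c := by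
      ext y
      by_cases hy : y ∈ S <;> simp [hy]
    simp only [hcoe, kernelAction_indicator]
    refine ⟨(integrable_piKer hmom hinv hS).ofReal.const_mul c, ?_⟩
    rw [integral_const_mul, integral_complex_ofReal, hinv S hS, integral_indicator_const _ hS,
      Complex.real_smul, mul_comm]
    rfl
  | @add f g _ ihf ihg =>
    obtain ⟨C, hC⟩ := f.exists_forall_norm_le
    obtain ⟨D, hD⟩ := g.exists_forall_norm_le
    simp only [SimpleFunc.coe_add, Pi.add_apply,
      kernelAction_add hmom f.measurable hC g.measurable hD]
    refine ⟨ihf.1.add ihg.1, ?_⟩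
    rw [integral_add ihf.1 ihg.1, ihf.2, ihg.2, integral_add
      (f.integrable_of_isFiniteMeasure) (g.integrable_of_isFiniteMeasure)]

lemma integral_kernelAction [IsFiniteMeasure ν]
    (hmom : Integrable (fun v => ‖Matrix.toEuclideanCLM (𝕜 := ℂ) (n := Fin k) v‖ ^ 2) μ)
    (hinv : IsPiInvariant μ ν) {g : ℙ k → ℂ} (hg : Measurable g) {C : ℝ}
    (hC : ∀ y, ‖g y‖ ≤ C) :
    ∫ x, kernelAction μ g x ∂ν = ∫ y, g y ∂ν := by
  let s : ℕ → SimpleFunc (ℙ k) ℂ := fun n => SimpleFunc.approxOn g hg Set.univ 0 (Set.mem_univ 0) n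
  have hsC : ∀ n y, ‖s n y‖ ≤ 2 * C := fun n y =>
    (SimpleFunc.norm_approxOn_zero_le hg (Set.mem_univ 0) y n).trans (by linarith [hC y])
  have hlim : ∀ y, Tendsto (fun n => s n y) atTop (𝓝 (g y)) := fun y =>
    SimpleFunc.tendsto_approxOn hg (Set.mem_univ 0) (by simp)
  have hleft : Tendsto (fun n => ∫ x, kernelAction μ (s n) x ∂ν) atTop
      (𝓝 (∫ x, kernelAction μ g x ∂ν)) :=
    tendsto_integral_of_dominated_convergence _
      (fun n => (integral_kernelAction_simpleFunc hmom hinv (s n)).1.aestronglyMeasurable)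
      (integrable_const _) (fun n => ae_of_all _ (norm_kernelAction_le hmom (hsC n)))
      (ae_of_all _ (tendsto_kernelAction hmom (fun n => (s n).measurable) hsC hlim))
  have hright : Tendsto (fun n => ∫ y, s n y ∂ν) atTop (𝓝 (∫ y, g y ∂ν)) :=
    tendsto_integral_of_dominated_convergence _ (fun n => (s n).aestronglyMeasurable)
      (integrable_const (2 * C)) (fun n => ae_of_all _ (hsC n)) (ae_of_all _ hlim)
  exact tendsto_nhds_unique
    (hleft.congr fun n => (integral_kernelAction_simpleFunc hmom hinv (s n)).2) hright

end Invariance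

section Channel

lemma integral_sum_sum_mul_const {α ι : Type*} [MeasurableSpace α] [Fintype ι] {ν : Measure α}
    {F : α → ι → ι → ℂ} (hF : ∀ a b, Integrable (fun x => F x a b) ν) (c : ι → ι → ℂ) :
    ∫ x, ∑ a, ∑ b, F x a b * c a b ∂ν = ∑ a, ∑ b, (∫ x, F x a b ∂ν) * c a b := by
  rw [integral_finsetSum _ fun a _ => integrable_finsetSum _ fun b _ => (hF a b).mul_const _]
  refine Finset.sum_congr rfl fun a _ => ?_
  rw [integral_finsetSum _ fun b _ => (hF a b).mul_const _]
  simp only [integral_mul_const]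

variable {k : ℕ}

lemma mul_mul_conjTranspose_apply (v A : Mat k) (i j : Fin k) :
    (v * A * vᴴ) i j = ∑ a, ∑ b, v i a * starRingEnd ℂ (v j b) * A a b := by
  simp only [Matrix.mul_apply, Matrix.conjTranspose_apply, Finset.sum_mul, RCLike.star_def]
  rw [Finset.sum_comm]
  refine Finset.sum_congr rfl fun a _ => Finset.sum_congr rfl fun b _ => ?_
  ring

lemma integral_mul_mul_conjTranspose_apply {μ : Measure (Mat k)}
    (hmom : Integrable (fun v => ‖Matrix.toEuclideanCLM (𝕜 := ℂ) (n := Fin k) v‖ ^ 2) μ)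
    (A : Mat k) (i j : Fin k) :
    ∫ v, (v * A * vᴴ) i j ∂μ = ∑ a, ∑ b, A a b * ∫ v, v i a * starRingEnd ℂ (v j b) ∂μ := by
  simp only [mul_mul_conjTranspose_apply,
    integral_sum_sum_mul_const (integrable_entry_mul_conj_entry hmom i j) A]
  exact Finset.sum_congr rfl fun a _ => Finset.sum_congr rfl fun b _ => mul_comm _ _

lemma measurable_projMat (i j : Fin k) : Measurable fun x : ℙ k => projMat x i j := by
  refine measurable_from_quotient.2 ?_
  have hmk : (fun x : ℙ k => projMat x i j) ∘ Quotient.mk'' = fun w : {w : Evec k // w ≠ 0} =>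
      w.1 i * starRingEnd ℂ (w.1 j) / (‖(w : Evec k)‖ : ℂ) ^ 2 :=
    funext fun w => projMat_mk w.2 i j
  refine hmk ▸ ?_
  have hcoord (l : Fin k) : Measurable fun w : {w : Evec k // w ≠ 0} => (w : Evec k) l :=
    (EuclideanSpace.proj (𝕜 := ℂ) l).continuous.measurable.comp measurable_subtype_coe
  exact ((hcoord i).mul (Complex.continuous_conj.measurable.comp (hcoord j))).div
    ((Complex.measurable_ofReal.comp measurable_subtype_coe.norm).pow_const 2)

lemma norm_projMat_le (x : ℙ k) (i j : Fin k) : ‖projMat x i j‖ ≤ 1 := by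
  have hi := PiLp.norm_apply_le (unitRep x) i
  have hj := PiLp.norm_apply_le (unitRep x) j
  rw [norm_unitRep] at hi hj
  simp only [projMat, Matrix.of_apply, norm_mul, RCLike.norm_conj]
  exact mul_le_one₀ hi (norm_nonneg _) hj

end Channel

theorem stmt5_general (k : ℕ) (μ : Measure (Mat k))
    (hmom : Integrable (fun v => ‖Matrix.toEuclideanCLM (𝕜 := ℂ) (n := Fin k) v‖ ^ 2) μ)
    (ν : Measure (Projectivization ℂ (Evec k))) [IsProbabilityMeasure ν]
    (hinv : ∀ S : Set (Projectivization ℂ (Evec k)), MeasurableSet S →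
      ∫ x, PiKer μ x S ∂ν = (ν S).toReal)
    (ρ : Mat k) (hρ : ∀ i j, ρ i j = ∫ x, projMat x i j ∂ν) :
    ∀ i j, ∫ v, (v * ρ * vᴴ) i j ∂μ = ρ i j := by
  intro i j
  have hproj_int (a b : Fin k) : Integrable (fun x => projMat x a b) ν :=
    (integrable_const (1 : ℝ)).mono' (measurable_projMat a b).aestronglyMeasurable
      (ae_of_all _ fun x => norm_projMat_le x a b)
  have hfixed := integral_kernelAction hmom hinv (measurable_projMat i j) (norm_projMat_le · i j)
  simp only [kernelAction_projMat, integral_mul_mul_conjTranspose_apply hmom] at hfixed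
  rw [integral_sum_sum_mul_const hproj_int] at hfixed
  rw [integral_mul_mul_conjTranspose_apply hmom, hρ i j, ← hfixed]
  simp only [hρ]

/-- If `ν` is a probability measure on `P(ℂ^k)` invariant for the kernel `Π`, then the
barycenter `ρ_ν = ∫ π_{x̂} dν(x̂)` is a fixed point of the channel `φ(ρ) = ∫ v ρ v* dμ(v)`. -/
theorem stmt5 (k : ℕ) (μ : Measure (Mat k))
    (hmom : Integrable (fun v => ‖Matrix.toEuclideanCLM (𝕜 := ℂ) (n := Fin k) v‖ ^ 2) μ)
    (hstoch : ∀ i j, ∫ v, (vᴴ * v) i j ∂μ = (1 : Mat k) i j)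
    (ν : Measure (Projectivization ℂ (Evec k))) [IsProbabilityMeasure ν]
    (hinv : ∀ S : Set (Projectivization ℂ (Evec k)), MeasurableSet S →
      ∫ x, PiKer μ x S ∂ν = (ν S).toReal)
    (ρ : Mat k) (hρ : ∀ i j, ρ i j = ∫ x, projMat x i j ∂ν) :
    ∀ i j, ∫ v, (v * ρ * vᴴ) i j ∂μ = ρ i j :=
  stmt5_general k μ hmom ν hinv ρ hρ
end
end

section
/- Let (W_n) be the product process W_n = V_n⋯V_1 of i.i.d.-style matrix coordinates on Ω = M_k(ℂ)^ℕ, and let P^ch be the probability measure whose restriction to n-cylinders has density (1/k) tr(W_n* W_n) with respect to μ^⊗n, where ∫ v*v dμ = Id. Then the process M_n := W_n* W_n / tr(W_n* W_n) (defined arbitrarily on the null event tr(W_n* W_n) = 0) is a matrix-valued martingale with respect to the filtration generated by the first n coordinates under P^ch. -/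
open MeasureTheory Filter Topology
open scoped ComplexOrder Matrix InnerProductSpace ENNReal
noncomputable section
attribute [local instance] Classical.propDecidable

/-- The space `Ω = M_k(ℂ)^ℕ` of infinite sequences of matrices. -/
abbrev Om (k : ℕ) := ℕ → Mat k

/-- `Wfin (v₁, …, v_n) = v_n ⋯ v₁`. -/
def Wfin {k n : ℕ} (v : Fin n → Mat k) : Mat k := ((List.ofFn v).reverse).prod

/-- `W_n(ω) = V_n(ω) ⋯ V_1(ω)` where `V_i(ω)` is the `i`-th coordinate of `ω`. -/
def Wseq {k : ℕ} (ω : Om k) (n : ℕ) : Mat k := Wfin (fun i : Fin n => ω i)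

/-- `P` restricted to `n`-cylinders has density `tr(W_n ρ W_n*)` with respect to `μ^⊗n`. -/
def cylProp {k : ℕ} (μ : Measure (Mat k)) [SigmaFinite μ] (ρ : Mat k)
    (P : Measure (Om k)) : Prop :=
  ∀ (n : ℕ) (g : (Fin n → Mat k) → ℝ≥0∞), Measurable g →
    ∫⁻ ω, g (fun i : Fin n => ω i) ∂P
      = ∫⁻ v, g v * ENNReal.ofReal ((Wfin v * ρ * (Wfin v)ᴴ).trace.re)
          ∂(Measure.pi fun _ : Fin n => μ)

/-- The process `M_n = W_n* W_n / tr(W_n* W_n)` (equal to `0` on the null event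
`tr(W_n* W_n) = 0`). -/
def Mmat {k : ℕ} (ω : Om k) (n : ℕ) : Mat k :=
  ((Wseq ω n)ᴴ * Wseq ω n).trace⁻¹ • ((Wseq ω n)ᴴ * Wseq ω n)

/-- The filtration `O_n` generated by the first `n` coordinates of `Ω`. -/
def cylFil (k : ℕ) : Filtration ℕ (inferInstance : MeasurableSpace (Om k)) where
  seq n := MeasurableSpace.comap (fun (ω : Om k) (i : Fin n) => ω i) inferInstance
  mono' := by
    intro n m hnm
    have h : (fun (ω : Om k) (i : Fin n) => ω (i : ℕ))
        = (fun (x : Fin m → Mat k) (i : Fin n) => x (Fin.castLE hnm i))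
          ∘ (fun (ω : Om k) (i : Fin m) => ω i) := rfl
    calc MeasurableSpace.comap (fun (ω : Om k) (i : Fin n) => ω (i : ℕ)) inferInstance
        = MeasurableSpace.comap (fun (ω : Om k) (i : Fin m) => ω i)
            (MeasurableSpace.comap
              (fun (x : Fin m → Mat k) (i : Fin n) => x (Fin.castLE hnm i)) inferInstance) := by
          rw [h, MeasurableSpace.comap_comp]
      _ ≤ _ := MeasurableSpace.comap_mono
          ((measurable_pi_lambda _ fun i => measurable_pi_apply _).comap_le)
  le' n := (measurable_pi_lambda _ fun i => measurable_pi_apply _).comap_le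


/-!
Under `P^ch`, the law of the first `n` coordinates is `(1/k) tr(W_n* W_n) · μ^⊗n`, so the
density exactly cancels the normalisation of `M_n`: on an `n`-cylinder `B`,
`∫_B M_n dP^ch = (1/k) ∫_B W_n* W_n dμ^⊗n`. Since `W_{n+1} = V_{n+1} W_n` with `V_{n+1}`
independent of the past under `μ^⊗(n+1)`, integrating out `V_{n+1}` with `∫ v*v dμ = Id` turns
`W_{n+1}* W_{n+1}` into `W_n* W_n`, which gives the martingale identity on cylinders.
-/

namespace Matrix

variable {m n : Type*} [Fintype m] [Fintype n]

lemma re_trace_conjTranspose_mul_self (A : Matrix m n ℂ) :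
    (Aᴴ * A).trace.re = ∑ j, ∑ i, ‖A i j‖ ^ 2 := by
  simp [trace, mul_apply, Complex.conj_mul', ← Complex.ofReal_pow]

lemma ofReal_re_trace_conjTranspose_mul_self (A : Matrix m n ℂ) :
    ((Aᴴ * A).trace.re : ℂ) = (Aᴴ * A).trace :=
  (Complex.eq_re_of_ofReal_le (r := 0) (by
    simpa using (posSemidef_conjTranspose_mul_self A).trace_nonneg)).symm

lemma re_trace_conjTranspose_mul_self_nonneg (A : Matrix m n ℂ) : 0 ≤ (Aᴴ * A).trace.re := by
  rw [re_trace_conjTranspose_mul_self]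
  positivity

lemma norm_conjTranspose_mul_self_apply_le (A : Matrix m n ℂ) (i j : n) :
    ‖(Aᴴ * A) i j‖ ≤ (Aᴴ * A).trace.re := by
  -- `‖a‖ ‖b‖ ≤ max ‖a‖² ‖b‖²`, and both squares are terms of the row sum
  have hrow : ∀ l, ‖A l i‖ * ‖A l j‖ ≤ ∑ c, ‖A l c‖ ^ 2 := fun l => by
    have hi := Finset.single_le_sum (f := fun c => ‖A l c‖ ^ 2) (fun _ _ => by positivity)
      (Finset.mem_univ i)
    have hj := Finset.single_le_sum (f := fun c => ‖A l c‖ ^ 2) (fun _ _ => by positivity)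
      (Finset.mem_univ j)
    rcases le_total ‖A l i‖ ‖A l j‖ with h | h <;>
      nlinarith [norm_nonneg (A l i), norm_nonneg (A l j)]
  calc ‖(Aᴴ * A) i j‖ ≤ ∑ l, ‖A l i‖ * ‖A l j‖ := by
        simpa [mul_apply] using norm_sum_le _ (fun l => star (A l i) * A l j)
    _ ≤ ∑ l, ∑ c, ‖A l c‖ ^ 2 := Finset.sum_le_sum fun l _ => hrow l
    _ = (Aᴴ * A).trace.re := by rw [re_trace_conjTranspose_mul_self, Finset.sum_comm]

lemma norm_trace_inv_smul_conjTranspose_mul_self_apply_le_one (A : Matrix m n ℂ) (i j : n) :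
    ‖((Aᴴ * A).trace⁻¹ • (Aᴴ * A)) i j‖ ≤ 1 := by
  rw [smul_apply, smul_eq_mul, norm_mul, norm_inv, ← ofReal_re_trace_conjTranspose_mul_self,
    Complex.norm_real, Real.norm_of_nonneg (re_trace_conjTranspose_mul_self_nonneg A)]
  exact inv_mul_le_one_of_le₀ (norm_conjTranspose_mul_self_apply_le A i j)
    (re_trace_conjTranspose_mul_self_nonneg A)

lemma re_trace_smul_trace_inv_smul_conjTranspose_mul_self (A : Matrix m n ℂ) :
    (Aᴴ * A).trace.re • ((Aᴴ * A).trace⁻¹ • (Aᴴ * A)) = Aᴴ * A := by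
  rw [← Complex.coe_smul, ofReal_re_trace_conjTranspose_mul_self]
  by_cases h : (Aᴴ * A).trace = 0
  · simp [trace_conjTranspose_mul_self_eq_zero_iff.1 h]
  · exact smul_inv_smul₀ h _

lemma trace_mul_smul_one_mul_conjTranspose {R : Type*} [CommSemiring R] [StarRing R]
    [DecidableEq n] (A : Matrix m n R) (c : R) :
    (A * (c • (1 : Matrix n n R)) * Aᴴ).trace = c * (Aᴴ * A).trace := by
  rw [Matrix.mul_smul, Matrix.mul_one, Matrix.smul_mul, trace_smul, trace_mul_comm, smul_eq_mul]

end Matrix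

open Matrix

instance (k : ℕ) : SecondCountableTopology (Mat k) :=
  inferInstanceAs (SecondCountableTopology (Fin k → Fin k → ℂ))

instance inst_s7 (k : ℕ) : BorelSpace (Mat k) :=
  inferInstanceAs (BorelSpace (Fin k → Fin k → ℂ))

section Wfin

variable {k : ℕ}

lemma Wfin_succ {n : ℕ} (v : Fin (n + 1) → Mat k) :
    Wfin v = v (Fin.last n) * Wfin (Fin.init v) := by
  rw [Wfin, Wfin, List.ofFn_succ', List.concat_eq_append, List.reverse_append, List.prod_append,
    List.reverse_singleton, List.prod_singleton]
  rfl

@[fun_prop]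
lemma continuous_Wfin {n : ℕ} : Continuous (Wfin : (Fin n → Mat k) → Mat k) := by
  induction n with
  | zero => exact (continuous_const (y := 1)).congr fun v => by simp [Wfin]
  | succ n ih =>
    simp_rw [funext Wfin_succ]
    exact (continuous_apply _).mul (ih.comp (by fun_prop))


end Wfin

section Cylinders

variable {k : ℕ}

def cylProj (n : ℕ) (ω : Om k) : Fin n → Mat k := fun i => ω i

@[fun_prop]
lemma measurable_cylProj (n : ℕ) : Measurable (cylProj (k := k) n) :=
  measurable_pi_lambda _ fun _ => measurable_pi_apply _

def cylDensity {n : ℕ} (ρ : Mat k) (v : Fin n → Mat k) : ℝ≥0∞ :=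
  ENNReal.ofReal ((Wfin v * ρ * (Wfin v)ᴴ).trace.re)

@[fun_prop]
lemma measurable_cylDensity {n : ℕ} (ρ : Mat k) : Measurable (cylDensity (n := n) ρ) := by
  unfold cylDensity
  fun_prop

lemma cylDensity_lt_top {n : ℕ} {ρ : Mat k} {v : Fin n → Mat k} : cylDensity ρ v < ∞ :=
  ENNReal.ofReal_lt_top

lemma toReal_cylDensity_inv_natCast_smul_one {n : ℕ} (v : Fin n → Mat k) :
    (cylDensity ((k : ℂ)⁻¹ • (1 : Mat k)) v).toReal
      = (k : ℝ)⁻¹ * ((Wfin v)ᴴ * Wfin v).trace.re := by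
  rw [cylDensity, trace_mul_smul_one_mul_conjTranspose, ← Complex.ofReal_natCast,
    ← Complex.ofReal_inv, Complex.re_ofReal_mul,
    ENNReal.toReal_ofReal (mul_nonneg (by positivity) (re_trace_conjTranspose_mul_self_nonneg _))]

variable {μ : Measure (Mat k)} [SigmaFinite μ] {ρ : Mat k} {P : Measure (Om k)}

lemma map_cylProj_eq_withDensity (hcyl : cylProp μ ρ P) (n : ℕ) :
    P.map (cylProj n) = (Measure.pi fun _ : Fin n => μ).withDensity (cylDensity ρ) := by
  ext s hs
  have hind : Measurable (s.indicator (1 : (Fin n → Mat k) → ℝ≥0∞)) :=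
    measurable_one.indicator hs
  rw [← lintegral_indicator_one hs, ← lintegral_indicator_one hs,
    lintegral_map hind (measurable_cylProj n),
    lintegral_withDensity_eq_lintegral_mul _ (measurable_cylDensity ρ) hind]
  simp_rw [Pi.mul_apply, mul_comm (cylDensity ρ _)]
  exact hcyl n _ hind

lemma lintegral_cylDensity [IsProbabilityMeasure P] (hcyl : cylProp μ ρ P) (n : ℕ) :
    ∫⁻ v, cylDensity ρ v ∂(Measure.pi fun _ : Fin n => μ) = 1 := by
  simpa [cylDensity] using (hcyl n 1 measurable_one).symm

lemma integrable_conjTranspose_mul_self_Wfin_apply [IsProbabilityMeasure P]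
    (hcyl : cylProp μ ((k : ℂ)⁻¹ • (1 : Mat k)) P) (n : ℕ) (i j : Fin k) :
    Integrable (fun v : Fin n → Mat k => ((Wfin v)ᴴ * Wfin v) i j)
      (Measure.pi fun _ : Fin n => μ) := by
  have hk : (k : ℝ) ≠ 0 := by exact_mod_cast i.pos.ne'
  have hdens := integrable_toReal_of_lintegral_ne_top (by fun_prop)
    ((lintegral_cylDensity hcyl n).trans_ne ENNReal.one_ne_top)
  refine (hdens.const_mul k).mono' (by fun_prop) (ae_of_all _ fun v => ?_)
  rw [toReal_cylDensity_inv_natCast_smul_one, mul_inv_cancel_left₀ hk]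
  exact norm_conjTranspose_mul_self_apply_le _ i j

lemma setIntegral_Mmat_preimage_cylProj (hcyl : cylProp μ ((k : ℂ)⁻¹ • (1 : Mat k)) P)
    (n : ℕ) (i j : Fin k) {B : Set (Fin n → Mat k)} (hB : MeasurableSet B) :
    ∫ ω in cylProj n ⁻¹' B, Mmat ω n i j ∂P
      = (k : ℂ)⁻¹ * ∫ v in B, ((Wfin v)ᴴ * Wfin v) i j ∂Measure.pi fun _ => μ := by
  calc ∫ ω in cylProj n ⁻¹' B, Mmat ω n i j ∂P
      = ∫ v in B, (((Wfin v)ᴴ * Wfin v).trace⁻¹ • ((Wfin v)ᴴ * Wfin v)) i j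
          ∂P.map (cylProj n) := by
        rw [setIntegral_map hB (by fun_prop) (by fun_prop)]
        rfl
    _ = ∫ v in B, (cylDensity ((k : ℂ)⁻¹ • (1 : Mat k)) v).toReal
          • (((Wfin v)ᴴ * Wfin v).trace⁻¹ • ((Wfin v)ᴴ * Wfin v)) i j
          ∂(Measure.pi fun _ : Fin n => μ) := by
        rw [map_cylProj_eq_withDensity hcyl, setIntegral_withDensity_eq_setIntegral_toReal_smul
          (measurable_cylDensity _) (ae_of_all _ fun _ => cylDensity_lt_top) _ hB]
    _ = ∫ v in B, (k : ℂ)⁻¹ * ((Wfin v)ᴴ * Wfin v) i j ∂Measure.pi fun _ => μ := by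
        refine setIntegral_congr_fun hB fun v _ => ?_
        rw [toReal_cylDensity_inv_natCast_smul_one, mul_smul, ← Matrix.smul_apply,
          re_trace_smul_trace_inv_smul_conjTranspose_mul_self]
        simp [Complex.real_smul]
    _ = _ := integral_const_mul _ _

end Cylinders

section OneStep

variable {k : ℕ} {μ : Measure (Mat k)}

lemma integrable_conjTranspose_mul_self_apply
    (hstoch : ∀ i j, ∫ v, (vᴴ * v) i j ∂μ = (1 : Mat k) i j) (a b : Fin k) :
    Integrable (fun x : Mat k => (xᴴ * x) a b) μ := by
  -- a diagonal entry has integral `1 ≠ 0`, so it cannot be the junk value of a non-integrable one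
  have hdiag : ∀ l, Integrable (fun x : Mat k => (xᴴ * x) l l) μ := fun l => by
    by_contra h
    simpa [integral_undef h] using hstoch l l
  have htrace : Integrable (fun x : Mat k => (xᴴ * x).trace.re) μ := by
    simpa [trace, Complex.re_sum] using integrable_finsetSum Finset.univ fun l _ => (hdiag l).re
  exact htrace.mono' (by fun_prop) (ae_of_all _ fun x => norm_conjTranspose_mul_self_apply_le x a b)

lemma integral_conjTranspose_mul_mul_self_apply
    (hstoch : ∀ i j, ∫ v, (vᴴ * v) i j ∂μ = (1 : Mat k) i j) (W : Mat k) (i j : Fin k) :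
    ∫ x, ((x * W)ᴴ * (x * W)) i j ∂μ = (Wᴴ * W) i j := by
  have hexpand : ∀ x : Mat k,
      ((x * W)ᴴ * (x * W)) i j = ∑ b, ∑ a, Wᴴ i a * (xᴴ * x) a b * W b j := fun x => by
    rw [conjTranspose_mul, Matrix.mul_assoc, ← Matrix.mul_assoc xᴴ, ← Matrix.mul_assoc,
      mul_apply]
    simp_rw [mul_apply, Finset.sum_mul]
  have hint : ∀ a b, Integrable (fun x : Mat k => Wᴴ i a * (xᴴ * x) a b * W b j) μ :=
    fun a b =>
    ((integrable_conjTranspose_mul_self_apply hstoch a b).const_mul _).mul_const _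
  simp_rw [hexpand]
  rw [integral_finsetSum _ fun b _ => integrable_finsetSum _ fun a _ => hint a b]
  simp_rw [integral_finsetSum _ fun a _ => hint a _, integral_mul_const, integral_const_mul, hstoch]
  simp [mul_apply, one_apply]

variable [SigmaFinite μ]

lemma setIntegral_preimage_init_conjTranspose_mul_self_Wfin_apply
    (hstoch : ∀ i j, ∫ v, (vᴴ * v) i j ∂μ = (1 : Mat k) i j) {n : ℕ} (i j : Fin k)
    (hint : Integrable (fun v : Fin (n + 1) → Mat k => ((Wfin v)ᴴ * Wfin v) i j)
      (Measure.pi fun _ => μ))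
    (A : Set (Fin n → Mat k)) :
    ∫ v in Fin.init ⁻¹' A, ((Wfin v)ᴴ * Wfin v) i j ∂(Measure.pi fun _ => μ)
      = ∫ w in A, ((Wfin w)ᴴ * Wfin w) i j ∂(Measure.pi fun _ => μ) := by
  let e := (MeasurableEquiv.piFinSuccAbove (fun _ => Mat k) (Fin.last n)).trans
    MeasurableEquiv.prodComm
  have he : MeasurePreserving e (Measure.pi fun _ => μ) ((Measure.pi fun _ => μ).prod μ) :=
    (measurePreserving_piFinSuccAbove (fun _ => μ) (Fin.last n)).trans
      Measure.measurePreserving_swap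
  have he_apply : ∀ v, e v = (Fin.init v, v (Fin.last n)) := fun v => by
    simp [e, MeasurableEquiv.prodComm]
  set G : (Fin n → Mat k) × Mat k → ℂ :=
    fun p => ((p.2 * Wfin p.1)ᴴ * (p.2 * Wfin p.1)) i j
  have hGe : ∀ v, G (e v) = ((Wfin v)ᴴ * Wfin v) i j := fun v => by
    simp only [G, he_apply, Wfin_succ v]
  have hG : Integrable G ((Measure.pi fun _ => μ).prod μ) :=
    (he.integrable_comp_emb e.measurableEmbedding).1 (by simpa [Function.comp_def, hGe] using hint)
  calc ∫ v in Fin.init ⁻¹' A, ((Wfin v)ᴴ * Wfin v) i j ∂(Measure.pi fun _ => μ)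
      = ∫ v in e ⁻¹' (A ×ˢ Set.univ), G (e v) ∂(Measure.pi fun _ => μ) := by
        simp_rw [hGe]
        congr 2
        ext v
        simp [he_apply]
    _ = ∫ p in A ×ˢ Set.univ, G p ∂((Measure.pi fun _ => μ).prod μ) :=
        he.setIntegral_preimage_emb e.measurableEmbedding G _
    _ = ∫ w in A, ∫ x, G (w, x) ∂μ ∂Measure.pi fun _ => μ := by
        rw [setIntegral_prod G hG.integrableOn, Measure.restrict_univ]
    _ = ∫ w in A, ((Wfin w)ᴴ * Wfin w) i j ∂(Measure.pi fun _ => μ) := by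
        simp only [G, integral_conjTranspose_mul_mul_self_apply hstoch]

end OneStep

section Adapted

variable {k : ℕ}

lemma stronglyAdapted_Mmat_apply (i j : Fin k) :
    StronglyAdapted (cylFil k) fun n ω => Mmat ω n i j := fun n => by
  have hproj : Measurable[cylFil k n] (cylProj (k := k) n) := comap_measurable _
  have hM : Measurable fun v : Fin n → Mat k =>
      (((Wfin v)ᴴ * Wfin v).trace⁻¹ • ((Wfin v)ᴴ * Wfin v)) i j := by fun_prop
  exact (hM.comp hproj).stronglyMeasurable

lemma integrable_Mmat_apply (P : Measure (Om k)) [IsFiniteMeasure P] (n : ℕ) (i j : Fin k) :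
    Integrable (fun ω => Mmat ω n i j) P :=
  .of_bound ((stronglyAdapted_Mmat_apply i j n).mono ((cylFil k).le n)).aestronglyMeasurable 1
    (ae_of_all _ fun _ => norm_trace_inv_smul_conjTranspose_mul_self_apply_le_one _ i j)

end Adapted

/-- Under the stochasticity condition `∫ v*v dμ = Id`, the process
`M_n = W_n* W_n / tr(W_n* W_n)` is a (matrix-valued, i.e. entrywise) martingale with respect to
the filtration generated by the first `n` coordinates, under the measure `P^ch` whose
restriction to `n`-cylinders has density `(1/k) tr(W_n* W_n)` with respect to `μ^⊗n`. -/
theorem stmt7 (k : ℕ) (μ : Measure (Mat k)) [SigmaFinite μ]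
    (hstoch : ∀ i j, ∫ v, (vᴴ * v) i j ∂μ = (1 : Mat k) i j)
    (Pch : Measure (Om k)) [IsProbabilityMeasure Pch]
    (hcyl : cylProp μ ((k : ℂ)⁻¹ • (1 : Mat k)) Pch) :
    ∀ i j, Martingale (fun n ω => Mmat ω n i j) (cylFil k) Pch := by
  intro i j
  refine martingale_of_setIntegral_eq_succ (stronglyAdapted_Mmat_apply i j)
    (fun n => integrable_Mmat_apply Pch n i j) fun n s hs => ?_
  obtain ⟨A, hA, rfl⟩ := hs
  have hA' : MeasurableSet ((Fin.init : (Fin (n + 1) → Mat k) → Fin n → Mat k) ⁻¹' A) :=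
    hA.preimage (measurable_pi_lambda _ fun _ => measurable_pi_apply _)
  calc ∫ ω in cylProj n ⁻¹' A, Mmat ω n i j ∂Pch
      = (k : ℂ)⁻¹ * ∫ v in A, ((Wfin v)ᴴ * Wfin v) i j ∂(Measure.pi fun _ => μ) :=
        setIntegral_Mmat_preimage_cylProj hcyl n i j hA
    _ = (k : ℂ)⁻¹ * ∫ v in Fin.init ⁻¹' A, ((Wfin v)ᴴ * Wfin v) i j
          ∂Measure.pi fun _ => μ := by
        rw [setIntegral_preimage_init_conjTranspose_mul_self_Wfin_apply hstoch i j
          (integrable_conjTranspose_mul_self_Wfin_apply hcyl (n + 1) i j)]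
    _ = ∫ ω in cylProj (n + 1) ⁻¹' (Fin.init ⁻¹' A), Mmat ω (n + 1) i j ∂Pch :=
        (setIntegral_Mmat_preimage_cylProj hcyl (n + 1) i j hA').symm
end
end
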